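/- arXiv:2409.17309 — 2 statements merged into one kernel-verified Lean document; each statement's English description precedes it below -/
import Mathlib

section
/- Let m ≥ 1, let a, b be real numbers with a > (m-1)/2 and b > (m-1)/2, let μ be an additive Haar measure on the space of m×m real symmetric matrices, and let ∇ be an m×m real symmetric positive definite matrix with positive semidefinite square root ∇^{1/2} (so (∇^{1/2})² = ∇). Then ∫_{{F : F and ∇ − F positive definite}} det(F)^{a-(m+1)/2} · det(I_m + F)^{-(a+b)} dμ(F) = det(∇)^a · ∫_{{R : R and I_m − R positive definite}} det(R)^{a-(m+1)/2} · det(I_m + ∇^{1/2} R ∇^{1/2})^{-(a+b)} dμ(R). (The change-of-variable identity F = ∇^{1/2} R ∇^{1/2} in the proof of Theorem 4, real case β = 1.) -/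
open Matrix MeasureTheory
open Finset Function Module
noncomputable section

/-- The real vector space of `m × m` real symmetric matrices. -/
def SymMat (m : ℕ) : Submodule ℝ (Matrix (Fin m) (Fin m) ℝ) where
  carrier := {A | A.IsSymm}
  add_mem' := fun ha hb => ha.add hb
  zero_mem' := Matrix.isSymm_zero
  smul_mem' := fun c A hA => hA.smul c

lemma mem_symMat {m : ℕ} {X : Matrix (Fin m) (Fin m) ℝ} (h : X ∈ SymMat m) : X.IsSymm := h

/-- `SymMat m` carries its Borel σ-algebra. -/
instance (m : ℕ) : MeasurableSpace (SymMat m) := borel _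
instance (m : ℕ) : BorelSpace (SymMat m) := ⟨rfl⟩
abbrev SymIdx (m : ℕ) := {p : Fin m × Fin m // p.1 ≤ p.2}

/-- Coordinates of a symmetric matrix: upper-triangular entries. -/
def symEquivFun (m : ℕ) : SymMat m ≃ₗ[ℝ] (SymIdx m → ℝ) where
  toFun A p := A.1 p.1.1 p.1.2
  map_add' A B := rfl
  map_smul' c A := rfl
  invFun f := ⟨Matrix.of fun i j =>
      if h : i ≤ j then f ⟨(i, j), h⟩ else f ⟨(j, i), le_of_not_ge h⟩, by
    show Matrix.IsSymm _
    ext i j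
    simp only [Matrix.transpose_apply, Matrix.of_apply]
    rcases le_total i j with h | h
    · rcases eq_or_lt_of_le h with rfl | h'
      · simp
      · rw [dif_neg (not_le.mpr h'), dif_pos h]
    · rcases eq_or_lt_of_le h with rfl | h'
      · simp
      · rw [dif_pos h, dif_neg (not_le.mpr h')]⟩
  left_inv A := by
    apply Subtype.ext
    ext i j
    simp only [Matrix.of_apply]
    split_ifs with h
    · rfl
    · conv_rhs => rw [← A.2]
      rfl
  right_inv f := by
    ext p
    simp only [Matrix.of_apply, dif_pos p.2]

def symBasis (m : ℕ) : Basis (SymIdx m) ℝ (SymMat m) := Basis.ofEquivFun (symEquivFun m)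

/-- Congruence by `M` as a linear map on symmetric matrices. -/
def congrMap (m : ℕ) (M : Matrix (Fin m) (Fin m) ℝ) : SymMat m →ₗ[ℝ] SymMat m where
  toFun A := ⟨M * A.1 * Mᵀ, by
    have hA : (A.1)ᵀ = A.1 := A.2
    show Matrix.IsSymm _
    unfold Matrix.IsSymm
    rw [Matrix.transpose_mul, Matrix.transpose_mul, Matrix.transpose_transpose, hA, mul_assoc]⟩
  map_add' A B := by
    apply Subtype.ext
    show M * (A.1 + B.1) * Mᵀ = _
    rw [Submodule.coe_add]
    show _ = M * A.1 * Mᵀ + M * B.1 * Mᵀ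
    noncomm_ring
  map_smul' c A := by
    apply Subtype.ext
    show M * (c • A.1) * Mᵀ = _
    rw [SetLike.val_smul]
    show _ = c • (M * A.1 * Mᵀ)
    simp

lemma congrMap_mul (m : ℕ) (M N : Matrix (Fin m) (Fin m) ℝ) :
    congrMap m (M * N) = (congrMap m M).comp (congrMap m N) := by
  ext A : 1
  apply Subtype.ext
  show (M * N) * A.1 * (M * N)ᵀ = M * (N * A.1 * Nᵀ) * Mᵀ
  rw [Matrix.transpose_mul]; noncomm_ring

lemma congrMap_one (m : ℕ) : congrMap m 1 = LinearMap.id := by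
  ext A : 1
  apply Subtype.ext
  show (1 : Matrix (Fin m) (Fin m) ℝ) * A.1 * (1 : Matrix (Fin m) (Fin m) ℝ)ᵀ = A.1
  simp

lemma det_congrMap_mul (m : ℕ) (M N : Matrix (Fin m) (Fin m) ℝ) :
    LinearMap.det (congrMap m (M * N))
      = LinearMap.det (congrMap m M) * LinearMap.det (congrMap m N) := by
  rw [congrMap_mul, LinearMap.det_comp]

lemma det_congrMap_diagonal (m : ℕ) (d : Fin m → ℝ) :
    LinearMap.det (congrMap m (Matrix.diagonal d))
      = ∏ p : SymIdx m, d p.1.1 * d p.1.2 := by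
  rw [← LinearMap.det_toMatrix (symBasis m)]
  have : LinearMap.toMatrix (symBasis m) (symBasis m) (congrMap m (Matrix.diagonal d))
      = Matrix.diagonal fun p : SymIdx m => d p.1.1 * d p.1.2 := by
    ext p q
    rw [LinearMap.toMatrix_apply]
    have hb : (symBasis m) q = (symEquivFun m).symm (Pi.single q 1) := by
      rw [symBasis, Basis.coe_ofEquivFun]
    have hrep : ((symBasis m).repr (congrMap m (Matrix.diagonal d) ((symEquivFun m).symm
        (Pi.single q 1)))) p = symEquivFun m (congrMap m (Matrix.diagonal d)
        ((symEquivFun m).symm (Pi.single q 1))) p :=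
      Basis.ofEquivFun_repr_apply _ _ _
    rw [hb, hrep]
    show (Matrix.diagonal d * ((symEquivFun m).symm (Pi.single q 1) : SymMat m).1
        * (Matrix.diagonal d)ᵀ) p.1.1 p.1.2 = _
    rw [Matrix.diagonal_transpose, Matrix.mul_diagonal, Matrix.diagonal_mul]
    have hsingle : (((symEquivFun m).symm (Pi.single q 1) : SymMat m).1) p.1.1 p.1.2
        = (Pi.single q (1 : ℝ) : SymIdx m → ℝ) p := by
      have := (symEquivFun m).apply_symm_apply (Pi.single q (1 : ℝ))
      exact congrFun this p
    rw [hsingle, Matrix.diagonal_apply, Pi.single_apply]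
    by_cases h : p = q
    · subst h; simp
    · simp [h, Ne.symm h]
  rw [this, Matrix.det_diagonal]

lemma subtype_prod {m : ℕ} (d : Fin m → ℝ) :
    ∏ p : SymIdx m, d p.1.1 * d p.1.2
      = ∏ p ∈ Finset.univ.filter (fun p : Fin m × Fin m => p.1 ≤ p.2), d p.1 * d p.2 := by
  exact (Finset.prod_subtype (p := fun p : Fin m × Fin m => p.1 ≤ p.2)
    (Finset.univ.filter (fun p : Fin m × Fin m => p.1 ≤ p.2))
    (fun p => by simp) (fun p => d p.1 * d p.2)).symm

lemma prod_pairs {m : ℕ} {d : Fin m → ℝ} (hd : ∀ i, 0 < d i) :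
    ∏ p : SymIdx m, d p.1.1 * d p.1.2 = (∏ i, d i) ^ (m + 1) := by
  rw [subtype_prod]
  set P := ∏ i, d i with hP
  have hPpos : 0 < P := Finset.prod_pos fun i _ => hd i
  set f : Fin m × Fin m → ℝ := fun p => d p.1 * d p.2 with hf
  have htotal : ∏ p : Fin m × Fin m, f p = P ^ m * P ^ m := by
    rw [Fintype.prod_prod_type]
    have : ∀ a : Fin m, (∏ b : Fin m, d a * d b) = d a ^ m * P := by
      intro a
      rw [Finset.prod_mul_distrib, Finset.prod_const, hP, Finset.card_univ, Fintype.card_fin]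
    simp only [f, this]
    rw [Finset.prod_mul_distrib, Finset.prod_const, Finset.prod_pow, Finset.card_univ,
      Fintype.card_fin, ← hP]
  set A := ∏ p ∈ Finset.univ.filter (fun p : Fin m × Fin m => p.1 ≤ p.2), f p with hA
  set C := ∏ p ∈ Finset.univ.filter (fun p : Fin m × Fin m => p.1 < p.2), f p with hC
  have hsplit : A * (∏ p ∈ Finset.univ.filter (fun p : Fin m × Fin m => ¬ p.1 ≤ p.2), f p)
      = P ^ m * P ^ m := by
    rw [hA, Finset.prod_filter_mul_prod_filter_not, htotal]
  have hBC : (∏ p ∈ Finset.univ.filter (fun p : Fin m × Fin m => ¬ p.1 ≤ p.2), f p) = C := by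
    rw [hC]
    apply Finset.prod_nbij' (fun p => Prod.swap p) (fun p => Prod.swap p)
    · intro p hp
      simp only [Finset.mem_filter, Finset.mem_univ, true_and, not_le] at hp ⊢
      exact hp
    · intro p hp
      simp only [Finset.mem_filter, Finset.mem_univ, true_and, not_le] at hp ⊢
      exact hp
    · intro p _; exact Prod.swap_swap p
    · intro p _; exact Prod.swap_swap p
    · intro p _
      simp only [f, Prod.fst_swap, Prod.snd_swap]
      ring
  have hdiag : (∏ p ∈ Finset.univ.filter (fun p : Fin m × Fin m => p.1 = p.2), f p) = P ^ 2 := by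
    rw [show (P ^ 2 = ∏ i : Fin m, d i * d i) by rw [hP, sq, ← Finset.prod_mul_distrib]]
    apply Finset.prod_nbij' (fun p => p.1) (fun i => (i, i))
    · intro p _; exact Finset.mem_univ _
    · intro i _
      simp
    · intro p hp
      simp only [Finset.mem_filter, Finset.mem_univ, true_and] at hp
      exact Prod.ext rfl hp
    · intro i _; rfl
    · intro p hp
      simp only [Finset.mem_filter, Finset.mem_univ, true_and] at hp
      simp only [f]
      rw [hp]
  have hAC : A = C * P ^ 2 := by
    rw [hA, hC, ← hdiag, ← Finset.prod_union]
    · apply Finset.prod_congr _ fun _ _ => rfl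
      rw [← Finset.filter_or]
      apply Finset.filter_congr
      intro p _
      simp [le_iff_lt_or_eq]
    · rw [Finset.disjoint_filter]
      intro p _ hlt
      exact ne_of_lt hlt
  have hApos : 0 < A := by
    rw [hA]
    exact Finset.prod_pos fun p _ => mul_pos (hd _) (hd _)
  have hAA : A ^ 2 = (P ^ (m + 1)) ^ 2 := by
    have : A * C = P ^ m * P ^ m := by rw [← hBC]; exact hsplit
    calc A ^ 2 = (A * C) * P ^ 2 := by rw [sq, hAC]; ring
    _ = (P ^ (m + 1)) ^ 2 := by rw [this]; ring
  have h2 := congrArg Real.sqrt hAA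
  rw [Real.sqrt_sq hApos.le, Real.sqrt_sq (by positivity)] at h2
  exact h2


lemma det_congrMap_posDef {m : ℕ} {Q : Matrix (Fin m) (Fin m) ℝ} (hQ : Q.PosDef) :
    LinearMap.det (congrMap m Q) = Q.det ^ (m + 1) := by
  have hH : Q.IsHermitian := hQ.isHermitian
  set U : Matrix (Fin m) (Fin m) ℝ := (hH.eigenvectorUnitary : Matrix (Fin m) (Fin m) ℝ) with hU
  set D : Matrix (Fin m) (Fin m) ℝ := Matrix.diagonal (RCLike.ofReal ∘ hH.eigenvalues) with hD
  have hspec : Q = U * D * star U := hH.spectral_theorem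
  have hUU : U * star U = 1 := Matrix.mem_unitaryGroup_iff.mp hH.eigenvectorUnitary.2
  have h1 : LinearMap.det (congrMap m Q)
      = LinearMap.det (congrMap m U) * LinearMap.det (congrMap m D)
        * LinearMap.det (congrMap m (star U)) := by
    rw [hspec, det_congrMap_mul, det_congrMap_mul]
  have h2 : LinearMap.det (congrMap m U) * LinearMap.det (congrMap m (star U)) = 1 := by
    rw [← det_congrMap_mul, hUU, congrMap_one, LinearMap.det_id]
  have hDid : D = Matrix.diagonal hH.eigenvalues := by
    rw [hD]; congr 1
  have h3 : LinearMap.det (congrMap m D) = Q.det ^ (m + 1) := by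
    rw [hDid, det_congrMap_diagonal, prod_pairs (fun i => hQ.eigenvalues_pos i)]
    congr 1
    rw [hH.det_eq_prod_eigenvalues]
    norm_num
  calc LinearMap.det (congrMap m Q)
      = (LinearMap.det (congrMap m U) * LinearMap.det (congrMap m (star U)))
        * LinearMap.det (congrMap m D) := by rw [h1]; ring
    _ = Q.det ^ (m + 1) := by rw [h2, h3, one_mul]

lemma posDef_conj {m : ℕ} {A B : Matrix (Fin m) (Fin m) ℝ} (hA : A.PosDef)
    (hB : IsUnit B.det) : (Bᴴ * A * B).PosDef := by
  refine posDef_iff_dotProduct_mulVec.mpr ⟨Matrix.isHermitian_conjTranspose_mul_mul B hA.1, fun x hx => ?_⟩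
  have hBx : B *ᵥ x ≠ 0 := by
    intro h
    have hinj := (Matrix.mulVec_injective_iff_isUnit.mpr ((Matrix.isUnit_iff_isUnit_det B).mpr hB))
    apply hx
    apply hinj
    simpa using h
  have := hA.dotProduct_mulVec_pos hBx
  simpa only [Matrix.star_mulVec, Matrix.dotProduct_mulVec, Matrix.vecMul_vecMul] using this

lemma posDef_conj_iff {m : ℕ} {A B : Matrix (Fin m) (Fin m) ℝ} (hB : IsUnit B.det) :
    (Bᴴ * A * B).PosDef ↔ A.PosDef := by
  constructor
  · intro h
    have hBinv : IsUnit (B⁻¹).det := by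
      rw [Matrix.det_nonsing_inv]
      exact IsUnit.of_mul_eq_one _ (Ring.inverse_mul_cancel _ hB)
    have := posDef_conj h hBinv
    have hBB : B * B⁻¹ = 1 := Matrix.mul_nonsing_inv B hB
    have hBB' : B⁻¹ * B = 1 := Matrix.nonsing_inv_mul B hB
    have heq : (B⁻¹)ᴴ * (Bᴴ * A * B) * B⁻¹ = A := by
      have : (B⁻¹)ᴴ * Bᴴ = 1 := by
        rw [← Matrix.conjTranspose_mul, hBB, Matrix.conjTranspose_one]
      calc (B⁻¹)ᴴ * (Bᴴ * A * B) * B⁻¹ = ((B⁻¹)ᴴ * Bᴴ) * A * (B * B⁻¹) := by noncomm_ring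
      _ = A := by rw [this, hBB]; simp
    rwa [heq] at this
  · intro h
    exact posDef_conj h hB

lemma posSemidef_and_det_ne_zero {m : ℕ} {A : Matrix (Fin m) (Fin m) ℝ}
    (h1 : A.PosSemidef) (h2 : A.det ≠ 0) : A.PosDef := by
  have hH := h1.1
  have hev : ∀ i, 0 < hH.eigenvalues i := by
    intro i
    rcases lt_or_eq_of_le (h1.eigenvalues_nonneg i) with h | h
    · exact h
    · exfalso
      apply h2
      rw [hH.det_eq_prod_eigenvalues]
      norm_num
      exact Finset.prod_eq_zero (Finset.mem_univ i) (by rw [← h])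
  have hspec := hH.spectral_theorem
  simp only [Unitary.conjStarAlgAut_apply, Unitary.coe_star] at hspec
  set U : Matrix (Fin m) (Fin m) ℝ := (hH.eigenvectorUnitary : Matrix (Fin m) (Fin m) ℝ) with hU
  have hUU : U * star U = 1 := Matrix.mem_unitaryGroup_iff.mp hH.eigenvectorUnitary.2
  have hUdet : IsUnit (star U).det := by
    have h1 : U.det * (star U).det = 1 := by rw [← Matrix.det_mul, hUU, Matrix.det_one]
    exact IsUnit.of_mul_eq_one _ (by rw [mul_comm]; exact h1)
  have hdiag : (Matrix.diagonal (RCLike.ofReal ∘ hH.eigenvalues) :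
      Matrix (Fin m) (Fin m) ℝ).PosDef := by
    rw [Matrix.posDef_diagonal_iff]
    intro i
    exact hev i
  have : ((star U)ᴴ * Matrix.diagonal (RCLike.ofReal ∘ hH.eigenvalues) * star U).PosDef :=
    posDef_conj hdiag hUdet
  rwa [← Matrix.star_eq_conjTranspose, star_star, ← hspec] at this


lemma measurableSet_posDef {m : ℕ} (g : SymMat m → Matrix (Fin m) (Fin m) ℝ)
    (hg : Continuous g) (hsym : ∀ F, (g F).IsSymm) :
    MeasurableSet {F : SymMat m | (g F).PosDef} := by
  have hset : {F : SymMat m | (g F).PosDef}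
      = (⋂ x : Fin m → ℝ, {F | 0 ≤ dotProduct (star x) ((g F) *ᵥ x)})
        ∩ {F | (g F).det ≠ 0} := by
    ext F
    simp only [Set.mem_setOf_eq, Set.mem_inter_iff, Set.mem_iInter]
    constructor
    · intro h
      exact ⟨fun x => h.posSemidef.dotProduct_mulVec_nonneg x, h.det_pos.ne'⟩
    · rintro ⟨h1, h2⟩
      apply posSemidef_and_det_ne_zero _ h2
      refine PosSemidef.of_dotProduct_mulVec_nonneg ?_ h1
      rw [Matrix.IsHermitian, Matrix.conjTranspose_eq_transpose_of_trivial]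
      exact hsym F
  rw [hset]
  apply MeasurableSet.inter
  · apply IsClosed.measurableSet
    apply isClosed_iInter
    intro x
    apply isClosed_le continuous_const
    exact Continuous.dotProduct continuous_const (hg.matrix_mulVec continuous_const)
  · have : {F : SymMat m | (g F).det ≠ 0} = (fun F => (g F).det) ⁻¹' ({0}ᶜ) := rfl
    rw [this]
    exact (hg.matrix_det.measurable) (measurableSet_singleton (0 : ℝ)).compl


theorem symmat_map_linearMap {m : ℕ} (μ : Measure (SymMat m)) [μ.IsAddHaarMeasure]
    {f : SymMat m →ₗ[ℝ] SymMat m} (hf : LinearMap.det f ≠ 0) :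
    Measure.map f μ = ENNReal.ofReal |(LinearMap.det f)⁻¹| • μ := by
  let ι := Fin (finrank ℝ (SymMat m))
  have : finrank ℝ (SymMat m) = finrank ℝ (ι → ℝ) := by simp [ι]
  have e : ↥(SymMat m) ≃ₗ[ℝ] ι → ℝ := LinearEquiv.ofFinrankEq ↥(SymMat m) (ι → ℝ) this
  obtain ⟨g, hg⟩ : ∃ g, g = (e : ↥(SymMat m) →ₗ[ℝ] ι → ℝ).comp (f.comp (e.symm : (ι → ℝ) →ₗ[ℝ] ↥(SymMat m))) := ⟨_, rfl⟩
  have gdet : LinearMap.det g = LinearMap.det f := by rw [hg]; exact LinearMap.det_conj f e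
  rw [← gdet] at hf ⊢
  have fg : f = (e.symm : (ι → ℝ) →ₗ[ℝ] ↥(SymMat m)).comp (g.comp (e : ↥(SymMat m) →ₗ[ℝ] ι → ℝ)) := by
    ext x
    simp only [LinearEquiv.coe_coe, Function.comp_apply, LinearMap.coe_comp,
      LinearEquiv.symm_apply_apply, hg]
  simp only [fg, LinearEquiv.coe_coe, LinearMap.coe_comp]
  have Ce : Continuous e := (e : ↥(SymMat m) →ₗ[ℝ] ι → ℝ).continuous_of_finiteDimensional
  have Cg : Continuous g := LinearMap.continuous_of_finiteDimensional g
  have Cesymm : Continuous e.symm := (e.symm : (ι → ℝ) →ₗ[ℝ] ↥(SymMat m)).continuous_of_finiteDimensional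
  rw [← Measure.map_map Cesymm.measurable (Cg.comp Ce).measurable,
    ← Measure.map_map Cg.measurable Ce.measurable]
  haveI : Measure.IsAddHaarMeasure (Measure.map e μ) :=
    (e : ↥(SymMat m) ≃+ (ι → ℝ)).isAddHaarMeasure_map μ Ce Cesymm
  have ecomp : (e.symm : (ι → ℝ) → ↥(SymMat m)) ∘ e = id := by
    ext x; simp only [id, Function.comp_apply, LinearEquiv.symm_apply_apply]
  rw [Measure.map_linearMap_addHaar_pi_eq_smul_addHaar hf (Measure.map e μ), Measure.map_smul,
    Measure.map_map Cesymm.measurable Ce.measurable, ecomp, Measure.map_id]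

lemma congrMap_coe {m : ℕ} (M : Matrix (Fin m) (Fin m) ℝ) (A : SymMat m) :
    ((congrMap m M) A).1 = M * A.1 * Mᵀ := rfl


/-- the change-of-variable identity `F = ∇^{1/2} R ∇^{1/2}` from the proof
of Theorem 4 (real case): integrating the beta type II density over `0 < F < ∇` equals
`det ∇ ^ a` times the corresponding integral over `0 < R < I`. -/
theorem betaII_change_of_variable (m : ℕ) (hm : 1 ≤ m) (μ : Measure (SymMat m))
    [μ.IsAddHaarMeasure] (a b : ℝ) (ha : ((m : ℝ) - 1) / 2 < a) (hb : ((m : ℝ) - 1) / 2 < b)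
    (V : SymMat m) (hV : V.1.PosDef) (Q : Matrix (Fin m) (Fin m) ℝ) (hQ : Q.PosSemidef)
    (hQ2 : Q * Q = V.1) :
    ∫⁻ F in {F : SymMat m | F.1.PosDef ∧ (V.1 - F.1).PosDef},
        ENNReal.ofReal (F.1.det ^ (a - ((m : ℝ) + 1) / 2) * (1 + F.1).det ^ (-(a + b))) ∂μ
      = ENNReal.ofReal (V.1.det ^ a) *
          ∫⁻ R in {R : SymMat m | R.1.PosDef ∧ (1 - R.1).PosDef},
            ENNReal.ofReal
              (R.1.det ^ (a - ((m : ℝ) + 1) / 2) * (1 + Q * R.1 * Q).det ^ (-(a + b))) ∂μ := by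
  have hdetV : 0 < V.1.det := hV.det_pos
  have hdetQ2 : Q.det * Q.det = V.1.det := by rw [← Matrix.det_mul, hQ2]
  have hdetQne : Q.det ≠ 0 := by
    intro h; rw [h, mul_zero] at hdetQ2; exact hdetV.ne' hdetQ2.symm
  have hQpd : Q.PosDef := posSemidef_and_det_ne_zero hQ hdetQne
  have hdetQ : 0 < Q.det := hQpd.det_pos
  have hQsym : Qᵀ = Q := by
    rw [← Matrix.conjTranspose_eq_transpose_of_trivial]; exact hQ.1
  have hQH : Qᴴ = Q := hQ.1
  set T := congrMap m Q with hT
  have hdetT : LinearMap.det T = Q.det ^ (m + 1) := det_congrMap_posDef hQpd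
  have hdetTpos : 0 < LinearMap.det T := by rw [hdetT]; positivity
  -- T as a measurable equiv
  have hQQinv : Q * Q⁻¹ = 1 := Matrix.mul_nonsing_inv Q (isUnit_iff_ne_zero.mpr hdetQne)
  have hQinvQ : Q⁻¹ * Q = 1 := Matrix.nonsing_inv_mul Q (isUnit_iff_ne_zero.mpr hdetQne)
  let Teq : SymMat m ≃ₗ[ℝ] SymMat m := LinearEquiv.ofLinear (congrMap m Q) (congrMap m Q⁻¹)
    (by rw [← congrMap_mul, hQQinv, congrMap_one])
    (by rw [← congrMap_mul, hQinvQ, congrMap_one])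
  have hTcont : Continuous Teq := LinearMap.continuous_of_finiteDimensional (Teq : SymMat m →ₗ[ℝ] SymMat m)
  have hTinvcont : Continuous Teq.symm :=
    LinearMap.continuous_of_finiteDimensional (Teq.symm : SymMat m →ₗ[ℝ] SymMat m)
  let Thom : SymMat m ≃ₜ SymMat m := ⟨Teq.toEquiv, hTcont, hTinvcont⟩
  let Tme : SymMat m ≃ᵐ SymMat m := Thom.toMeasurableEquiv
  -- sets
  set t : Set (SymMat m) := {F : SymMat m | F.1.PosDef ∧ (V.1 - F.1).PosDef} with ht_def
  set s : Set (SymMat m) := {R : SymMat m | R.1.PosDef ∧ (1 - R.1).PosDef} with hs_def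
  have ht : MeasurableSet t := by
    rw [ht_def, Set.setOf_and]
    exact (measurableSet_posDef _ continuous_subtype_val fun F => F.2).inter
      (measurableSet_posDef _ (continuous_const.sub continuous_subtype_val)
        fun F => (mem_symMat V.2).sub (mem_symMat F.2))
  -- preimage identity
  have key1 : ∀ R : SymMat m, (Teq R).1 = Q * R.1 * Q := by
    intro R
    show ((congrMap m Q) R).1 = _
    rw [congrMap_coe, hQsym]
  have key2 : ∀ R : SymMat m, V.1 - (Teq R).1 = Q * ((1 : Matrix (Fin m) (Fin m) ℝ) - R.1) * Q := by
    intro R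
    rw [key1, Matrix.mul_sub, Matrix.sub_mul, mul_one, hQ2]
  have hpre : (⇑Teq) ⁻¹' t = s := by
    ext R
    simp only [Set.mem_preimage, ht_def, hs_def, Set.mem_setOf_eq]
    rw [key2 R, key1 R]
    have hu : IsUnit Q.det := isUnit_iff_ne_zero.mpr hdetQne
    constructor
    · rintro ⟨h1, h2⟩
      have h1' : (Qᴴ * R.1 * Q).PosDef := by rw [hQH]; exact h1
      have h2' : (Qᴴ * ((1 : Matrix (Fin m) (Fin m) ℝ) - R.1) * Q).PosDef := by
        rw [hQH]; exact h2
      exact ⟨(posDef_conj_iff hu).mp h1', (posDef_conj_iff hu).mp h2'⟩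
    · rintro ⟨h1, h2⟩
      have h1' := posDef_conj h1 hu
      have h2' := posDef_conj h2 hu
      rw [hQH] at h1' h2'
      exact ⟨h1', h2'⟩
  have hs : MeasurableSet s := by
    rw [hs_def, Set.setOf_and]
    exact (measurableSet_posDef _ continuous_subtype_val fun F => F.2).inter
      (measurableSet_posDef _ (continuous_const.sub continuous_subtype_val)
        fun F => (Matrix.isSymm_one).sub (mem_symMat F.2))
  have hmap : Measure.map (⇑Teq) μ = ENNReal.ofReal |(LinearMap.det T)⁻¹| • μ := by
    have hco : (⇑Teq : SymMat m → SymMat m) = ⇑(T : SymMat m →ₗ[ℝ] SymMat m) := rfl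
    rw [hco]
    exact symmat_map_linearMap μ hdetTpos.ne'
  have hTmeco : (⇑Tme : SymMat m → SymMat m) = ⇑Teq := rfl
  have h1 : ∫⁻ F in t, ENNReal.ofReal
        (F.1.det ^ (a - ((m : ℝ) + 1) / 2) * (1 + F.1).det ^ (-(a + b))) ∂(Measure.map (⇑Teq) μ)
      = ENNReal.ofReal |(LinearMap.det T)⁻¹| * ∫⁻ F in t, ENNReal.ofReal
        (F.1.det ^ (a - ((m : ℝ) + 1) / 2) * (1 + F.1).det ^ (-(a + b))) ∂μ := by
    rw [hmap, Measure.restrict_smul, lintegral_smul_measure, smul_eq_mul]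
  have h2 : ∫⁻ F in t, ENNReal.ofReal
        (F.1.det ^ (a - ((m : ℝ) + 1) / 2) * (1 + F.1).det ^ (-(a + b))) ∂(Measure.map (⇑Teq) μ)
      = ∫⁻ R in s, ENNReal.ofReal
        ((Teq R).1.det ^ (a - ((m : ℝ) + 1) / 2) * (1 + (Teq R).1).det ^ (-(a + b))) ∂μ := by
    rw [← hTmeco, Measure.restrict_map Tme.measurable ht, hTmeco, hpre, ← hTmeco]
    exact lintegral_map_equiv (μ := μ.restrict s) _ Tme
  have h3 : ∫⁻ F in t, ENNReal.ofReal
        (F.1.det ^ (a - ((m : ℝ) + 1) / 2) * (1 + F.1).det ^ (-(a + b))) ∂μ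
      = ENNReal.ofReal (LinearMap.det T) * ∫⁻ R in s, ENNReal.ofReal
        ((Teq R).1.det ^ (a - ((m : ℝ) + 1) / 2) * (1 + (Teq R).1).det ^ (-(a + b))) ∂μ := by
    have e1 : ENNReal.ofReal (LinearMap.det T) * ENNReal.ofReal |(LinearMap.det T)⁻¹| = 1 := by
      rw [← ENNReal.ofReal_mul hdetTpos.le, abs_of_pos (by positivity),
        mul_inv_cancel₀ hdetTpos.ne', ENNReal.ofReal_one]
    calc ∫⁻ F in t, ENNReal.ofReal
          (F.1.det ^ (a - ((m : ℝ) + 1) / 2) * (1 + F.1).det ^ (-(a + b))) ∂μ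
        = 1 * ∫⁻ F in t, ENNReal.ofReal
          (F.1.det ^ (a - ((m : ℝ) + 1) / 2) * (1 + F.1).det ^ (-(a + b))) ∂μ := (one_mul _).symm
      _ = ENNReal.ofReal (LinearMap.det T) * (ENNReal.ofReal |(LinearMap.det T)⁻¹|
            * ∫⁻ F in t, ENNReal.ofReal
              (F.1.det ^ (a - ((m : ℝ) + 1) / 2) * (1 + F.1).det ^ (-(a + b))) ∂μ) := by
          rw [← mul_assoc, e1]
      _ = _ := by rw [← h1, h2]
  have h4 : ∫⁻ R in s, ENNReal.ofReal
        ((Teq R).1.det ^ (a - ((m : ℝ) + 1) / 2) * (1 + (Teq R).1).det ^ (-(a + b))) ∂μ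
      = ENNReal.ofReal (V.1.det ^ (a - ((m : ℝ) + 1) / 2)) * ∫⁻ R in s, ENNReal.ofReal
        (R.1.det ^ (a - ((m : ℝ) + 1) / 2) * (1 + Q * R.1 * Q).det ^ (-(a + b))) ∂μ := by
    rw [← lintegral_const_mul' _ _ ENNReal.ofReal_ne_top]
    apply setLIntegral_congr_fun hs
    intro R hR
    have hRd : 0 < R.1.det := hR.1.det_pos
    have hdet1 : (Teq R).1.det = V.1.det * R.1.det := by
      rw [key1 R, Matrix.det_mul, Matrix.det_mul, ← hdetQ2]; ring
    have h1R : (1 : Matrix (Fin m) (Fin m) ℝ) + (Teq R).1 = 1 + Q * R.1 * Q := by rw [key1 R]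
    beta_reduce
    rw [hdet1, h1R, Real.mul_rpow hdetV.le hRd.le, mul_assoc,
      ENNReal.ofReal_mul (by positivity)]
  have h5 : ENNReal.ofReal (LinearMap.det T) * ENNReal.ofReal (V.1.det ^ (a - ((m : ℝ) + 1) / 2))
      = ENNReal.ofReal (V.1.det ^ a) := by
    rw [hdetT, ← ENNReal.ofReal_mul (by positivity)]
    congr 1
    have hQV : Q.det ^ 2 = V.1.det := by rw [sq]; exact hdetQ2
    have l1 : (Q.det ^ (m + 1)) ^ 2 = V.1.det ^ (m + 1) := by
      rw [← pow_mul, mul_comm, pow_mul, hQV]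
    have l2 : (V.1.det ^ (((m : ℝ) + 1) / 2)) ^ 2 = V.1.det ^ (m + 1) := by
      rw [← Real.rpow_natCast (V.1.det ^ (((m : ℝ) + 1) / 2)) 2, ← Real.rpow_mul hdetV.le,
        ← Real.rpow_natCast V.1.det (m + 1)]
      congr 1
      push_cast
      ring
    have hq : Q.det ^ (m + 1) = V.1.det ^ (((m : ℝ) + 1) / 2) := by
      have hc := congrArg Real.sqrt (l1.trans l2.symm)
      rwa [Real.sqrt_sq (by positivity), Real.sqrt_sq (Real.rpow_nonneg hdetV.le _)] at hc
    rw [hq, ← Real.rpow_add hdetV]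
    congr 1
    ring
  rw [h3, h4, ← mul_assoc, h5]
end
end

section
/- Let m ≥ 1 and let A be an invertible m×m complex matrix. The determinant of the ℝ-linear endomorphism of the real vector space of m×m complex Hermitian matrices given by X ↦ A X A* equals |det A|^{2m}, where A* is the conjugate transpose and |·| is the complex absolute value. (Complex case β = 2 of Proposition 1(i): the Jacobian of Y = A X A* on Hermitian matrices is |A*A|^{(m-1)+1} = |det A|^{2m}.) -/
open Matrix MeasureTheory ComplexOrder
noncomputable section

/-- The real vector space of `m × m` complex Hermitian matrices. -/
def HermMat (m : ℕ) : Submodule ℝ (Matrix (Fin m) (Fin m) ℂ) where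
  carrier := {X | X.IsHermitian}
  add_mem' := fun h1 h2 => h1.add h2
  zero_mem' := Matrix.isHermitian_zero
  smul_mem' := fun c X hX => by
    show (c • X)ᴴ = c • X
    rw [Matrix.conjTranspose_smul, star_trivial]
    exact congrArg (c • ·) hX

lemma mem_hermMat {m : ℕ} {X : Matrix (Fin m) (Fin m) ℂ} (h : X ∈ HermMat m) :
    X.IsHermitian := h

/-- `HermMat m` carries its Borel σ-algebra. -/
instance (m : ℕ) : MeasurableSpace (HermMat m) := borel _
instance (m : ℕ) : BorelSpace (HermMat m) := ⟨rfl⟩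
lemma isHermitian_congr {m : ℕ} (A : Matrix (Fin m) (Fin m) ℂ)
    {X : Matrix (Fin m) (Fin m) ℂ} (hX : X.IsHermitian) : (A * X * Aᴴ).IsHermitian := by
  show (A * X * Aᴴ)ᴴ = A * X * Aᴴ
  rw [Matrix.conjTranspose_mul, Matrix.conjTranspose_mul,
    Matrix.conjTranspose_conjTranspose, hX.eq, Matrix.mul_assoc]

/-- The ℝ-linear endomorphism `X ↦ A X A*` of the space of Hermitian matrices. -/
def hermCongr {m : ℕ} (A : Matrix (Fin m) (Fin m) ℂ) : HermMat m →ₗ[ℝ] HermMat m where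
  toFun X := ⟨A * X.1 * Aᴴ, isHermitian_congr A (mem_hermMat X.2)⟩
  map_add' X Y := by apply Subtype.ext; simp [Matrix.mul_add, Matrix.add_mul]
  map_smul' c X := by apply Subtype.ext; simp [Matrix.mul_smul, Matrix.smul_mul]

/-!
`Herm(m)` is a real form of `M_m(ℂ)`: writing `X = Re X + i Im X` identifies `ℂ ⊗_ℝ Herm(m)`
with `M_m(ℂ)`, and under this identification the complexification of `X ↦ A X A*` is the
`ℂ`-linear map `X ↦ A X A*` of `M_m(ℂ)`. Determinants are unchanged by base change, and on
`M_m(ℂ)` left multiplication by `A` acts on each of the `m` columns separately (right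
multiplication by `A*` on each row), so the determinant is
`(det A)^m (det A*)^m = |det A|^(2m)`.
-/

open TensorProduct ComplexStarModule

theorem LinearMap.det_mulRight_matrix {n R : Type*} [Fintype n] [DecidableEq n] [CommRing R]
    (B : Matrix n n R) : (LinearMap.mulRight R B).det = B.det ^ Fintype.card n := by
  let e := Matrix.ofLinearEquiv (m := n) (n := n) (α := R) R
  have rowwise : LinearMap.mulRight R B = e.toLinearMap ∘ₗ
      LinearMap.pi (fun i : n ↦ (Matrix.toLin' Bᵀ).comp (LinearMap.proj i)) ∘ₗ
        e.symm.toLinearMap := by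
    ext X i j
    simp [e, Matrix.mul_apply, Matrix.mulVec, dotProduct, mul_comm]
  rw [rowwise, LinearMap.det_conj, LinearMap.det_pi]
  simp [LinearMap.det_toLin']

theorem LinearMap.det_mulLeft_matrix {n R : Type*} [Fintype n] [DecidableEq n] [CommRing R]
    (A : Matrix n n R) : (LinearMap.mulLeft R A).det = A.det ^ Fintype.card n := by
  let e := Matrix.transposeLinearEquiv n n R R
  have columnwise : LinearMap.mulLeft R A =
      e.toLinearMap ∘ₗ LinearMap.mulRight R Aᵀ ∘ₗ e.symm.toLinearMap := by
    ext X i j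
    simp [e, ← Matrix.transpose_mul]
  rw [columnwise, LinearMap.det_conj, det_mulRight_matrix, Matrix.det_transpose]

theorem IsBaseChange.det_eq_algebraMap_det {R S M P : Type*} [CommRing R] [CommRing S]
    [Algebra R S] [AddCommGroup M] [Module R M] [Module.Free R M] [Module.Finite R M]
    [AddCommGroup P] [Module R P] [Module S P] [IsScalarTower R S P]
    {α : M →ₗ[R] P} (j : IsBaseChange S α) {f : M →ₗ[R] M} {F : P →ₗ[S] P}
    (hF : ∀ x, F (α x) = α (f x)) : LinearMap.det F = algebraMap R S (LinearMap.det f) := by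
  have : F = j.endHom f := j.algHom_ext' _ _ <| LinearMap.ext fun x ↦ by
    simp [hF, IsBaseChange.endHom_comp_apply]
  rw [this, IsBaseChange.det_endHom]

theorem isBaseChange_selfAdjoint_submodule_subtype {W : Type*} [AddCommGroup W] [Module ℂ W]
    [StarAddMonoid W] [StarModule ℂ W] :
    IsBaseChange ℂ (selfAdjoint.submodule ℝ W).subtype := by
  let V := selfAdjoint.submodule ℝ W
  let re : W →ₗ[ℝ] V :=
    { toFun w := ⟨ℜ w, (ℜ w).2⟩, map_add' _ _ := by ext; simp, map_smul' _ _ := by ext; simp }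
  let im : W →ₗ[ℝ] V :=
    { toFun w := ⟨ℑ w, (ℑ w).2⟩, map_add' _ _ := by ext; simp, map_smul' _ _ := by ext; simp }
  let toTensor : W →ₗ[ℝ] ℂ ⊗[ℝ] V := mk ℝ ℂ V 1 ∘ₗ re + mk ℝ ℂ V Complex.I ∘ₗ im
  have left : Function.LeftInverse toTensor (V.subtype.liftBaseChange ℂ) := by
    intro t
    induction t with
    | zero => simp
    | add x y hx hy => rw [map_add, map_add, hx, hy]
    | tmul z v =>
      have hv : IsSelfAdjoint (v : W) := v.2
      have hre : re (z • v) = z.re • v := by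
        ext; simp [re, realPart_smul, hv.coe_realPart, hv.imaginaryPart]
      have him : im (z • v) = z.im • v := by
        ext; simp [im, imaginaryPart_smul, hv.coe_realPart, hv.imaginaryPart]
      simp only [toTensor, LinearMap.liftBaseChange_tmul, Submodule.subtype_apply,
        LinearMap.add_apply, LinearMap.comp_apply, mk_apply, hre, him]
      rw [← smul_tmul, ← smul_tmul, ← add_tmul, Complex.real_smul, Complex.real_smul, mul_one,
        Complex.re_add_im]
  have right : Function.RightInverse toTensor (V.subtype.liftBaseChange ℂ) := fun w ↦ by
    simp [toTensor, re, im, realPart_add_I_smul_imaginaryPart]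
  exact .of_equiv (.ofBijective _ ⟨left.injective, right.surjective⟩) fun _ ↦ one_smul ℂ _

theorem det_hermCongr_general (m : ℕ) (A : Matrix (Fin m) (Fin m) ℂ) :
    LinearMap.det (hermCongr A) = ‖A.det‖ ^ (2 * m) := by
  -- `HermMat m` is `selfAdjoint.submodule ℝ _` up to unfolding.
  have hHerm : IsBaseChange ℂ (HermMat m).subtype := isBaseChange_selfAdjoint_submodule_subtype
  have hF := hHerm.det_eq_algebraMap_det (f := hermCongr A)
    (F := LinearMap.mulLeft ℂ A ∘ₗ LinearMap.mulRight ℂ Aᴴ) fun X ↦ by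
      simp [hermCongr, Matrix.mul_assoc]
  rw [LinearMap.det_comp, LinearMap.det_mulLeft_matrix, LinearMap.det_mulRight_matrix,
    Matrix.det_conjTranspose, Fintype.card_fin, ← mul_pow] at hF
  apply (algebraMap ℝ ℂ).injective
  rw [← hF]
  simp [pow_mul, Complex.mul_conj']

/-- complex case β = 2 of Proposition 1(i): for invertible complex `A`, the
determinant of the ℝ-linear endomorphism `X ↦ A X A*` of the Hermitian matrices is
`|det A| ^ (2m)`. -/
theorem det_hermCongr (m : ℕ) (hm : 1 ≤ m) (A : Matrix (Fin m) (Fin m) ℂ)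
    (hA : IsUnit A.det) :
    LinearMap.det (hermCongr A) = ‖A.det‖ ^ (2 * m) :=
  det_hermCongr_general m A
end
end
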